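/- Let G_n' be the extended welded tree graph of odd depth n, and define v₂ ∈ ℂ^E by: (v₂)_e = (−1/2)^⌊j/2⌋ if e belongs to layer j of the left tree, and (v₂)_e = (−1/2)^⌈j/2⌉ if e belongs to layer j of the right tree (the middle layer being layer n+1 of both trees, on which the two formulas agree since n is odd). Then |ss'⟩ + v₂ lies in the span of {ψ_u : u ∈ A}, and v₂ + |t't⟩ is orthogonal to ψ_u for every u ∈ B. Consequently R_A(|ss'⟩ + v₂ − |t't⟩) = −|ss'⟩ − v₂ − |t't⟩ and R_B fixes −|ss'⟩ − v₂ − |t't⟩. -/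

import Mathlib

/-!
**Statement 8.**
Let `G_n'` be the extended welded tree graph of odd depth `n`, and define `v₂ ∈ ℂ^E` by
`(v₂)_e = (−1/2)^⌊j/2⌋` on layer `j` of the left tree and `(v₂)_e = (−1/2)^⌈j/2⌉` on layer `j`
of the right tree (the middle layer being layer `n+1` of both trees, on which the two
formulas agree as `n` is odd).  Then `|ss'⟩ + v₂` lies in the span of `{ψ_u : u ∈ A}`, and
`v₂ + |t't⟩` is orthogonal to `ψ_u` for every `u ∈ B`.  Consequently
`R_A (|ss'⟩ + v₂ − |t't⟩) = −|ss'⟩ − v₂ − |t't⟩` and `R_B` fixes `−|ss'⟩ − v₂ − |t't⟩`.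

The welded tree graph is modelled abstractly: vertices `V` carry a side (`false` = left tree,
`true` = right tree) and a depth `≤ n`; edges `E` carry a layer `lay e ∈ {1, …, n+1}`
(`lay e = n+1` meaning a middle edge) and a side (meaningful for tree edges), with endpoint
maps `ep0` (shallower / left endpoint) and `ep1` (deeper / right endpoint).  A tree edge of
layer `j` joins a vertex of depth `j−1` to one of depth `j` on its own side; a middle edge
joins a left leaf to a right leaf.  Every vertex of depth `< n` has exactly two child edges,
every vertex of depth `≥ 1` has exactly one parent tree edge, and every leaf is incident to
exactly two middle edges; `s` and `t` are the unique roots of the two trees.  All edges have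
weight 1.  The walk space is `EuclideanSpace ℂ (E ⊕ Bool)` (`Sum.inr false = ss'`,
`Sum.inr true = t't`); part `A` consists of left vertices of even depth and right vertices of
odd depth, part `B` of the remaining vertices.  `R_A` is the unitary acting as `−1` on
`span{ψ_u : u ∈ A}` and as the identity on its orthogonal complement, specified here by these
defining properties (similarly `R_B`).
-/

noncomputable section

namespace Stmt8

variable {V E : Type*} [Fintype V] [Fintype E] [DecidableEq V] [DecidableEq E]

def ket (x : E ⊕ Bool) : EuclideanSpace ℂ (E ⊕ Bool) := EuclideanSpace.single x 1

/-- Vertices of part `A`: left vertices of even depth, right vertices of odd depth. -/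
def inA (sideV : V → Bool) (depth : V → ℕ) (u : V) : Prop :=
  (sideV u = false ∧ Even (depth u)) ∨ (sideV u = true ∧ Odd (depth u))

/-- Vertices of part `B`: left vertices of odd depth, right vertices of even depth. -/
def inB (sideV : V → Bool) (depth : V → ℕ) (u : V) : Prop :=
  (sideV u = false ∧ Odd (depth u)) ∨ (sideV u = true ∧ Even (depth u))

/-- The star state of a vertex `u`: the sum of the basis states of all edges of the extended
graph incident to `u` (all weights being 1). -/
def psi (ep0 ep1 : E → V) (s t : V) (u : V) : EuclideanSpace ℂ (E ⊕ Bool) :=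
  (∑ e ∈ Finset.univ.filter (fun e => ep0 e = u), ket (Sum.inl e)) +
  (∑ e ∈ Finset.univ.filter (fun e => ep1 e = u), ket (Sum.inl e)) +
  (if u = s then ket (Sum.inr false) else 0) +
  (if u = t then ket (Sum.inr true) else 0)

/-- The vector `v₂`: amplitude `(−1/2)^⌊j/2⌋` on layer `j` of the left tree and
`(−1/2)^⌈j/2⌉` on layer `j` of the right tree (`⌊j/2⌋ = j/2` and `⌈j/2⌉ = (j+1)/2` in
natural-number division). -/
def v₂ (lay : E → ℕ) (sideE : E → Bool) : EuclideanSpace ℂ (E ⊕ Bool) :=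
  ∑ e : E, ((if sideE e = false then (-(1/2) : ℂ) ^ (lay e / 2)
      else (-(1/2) : ℂ) ^ ((lay e + 1) / 2)) • ket (Sum.inl e))

end Stmt8

/-!
Place a left vertex of depth `d` at position `d`, a right vertex of depth `d` at position
`d + 1`, and an edge of layer `j` on side `b` at position `j + b`.  Then `A` and `B` are the
vertices at even and odd positions, every edge joins positions `p` and `p + 1`, and `v₂` has
amplitude `(−1/2)^⌊q/2⌋` on an edge at position `q`, the same as at its deeper endpoint
(for the middle layer this uses that `n` is odd).

So `|ss'⟩ + v₂ = ∑_{u ∈ A} (−1/2)^⌊pos u/2⌋ ψ_u`: an edge sees only its endpoint at even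
position, whose amplitude agrees with the edge's whenever it is the shallower one.  At a vertex
of `B`, at odd position `p`, the parent edge (or `t't` at `t`) carries `(−1/2)^⌊p/2⌋` and each
of the two child edges `−1/2` times that, so `ψ_u ⊥ v₂ + |t't⟩`.
-/

namespace Stmt8

section

variable {ι R M : Type*} [Fintype ι] [Semiring R] [AddCommMonoid M] [Module R M]

theorem sum_smul_mem_span_image (f : ι → M) (w : ι → R) (S : Set ι)
    (hw : ∀ i ∉ S, w i = 0) : ∑ i, w i • f i ∈ Submodule.span R (f '' S) := by
  refine Submodule.sum_mem _ fun i _ => ?_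
  by_cases hi : i ∈ S
  · exact Submodule.smul_mem _ _ (Submodule.subset_span ⟨i, hi, rfl⟩)
  · rw [hw i hi, zero_smul]
    exact Submodule.zero_mem _

end

variable {V E : Type*}

def amp (k : ℕ) : ℂ := (-(1/2) : ℂ) ^ (k / 2)

theorem amp_succ_of_even {k : ℕ} (hk : Even k) : amp (k + 1) = amp k := by
  obtain ⟨m, rfl⟩ := hk
  unfold amp
  congr 1
  omega

theorem amp_succ_of_odd {k : ℕ} (hk : Odd k) : amp (k + 1) = -(1/2) * amp k := by
  obtain ⟨m, rfl⟩ := hk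
  rw [amp, amp, show (2 * m + 1 + 1) / 2 = (2 * m + 1) / 2 + 1 by omega, pow_succ']

def vertexPos (sideV : V → Bool) (depth : V → ℕ) (u : V) : ℕ := depth u + (sideV u).toNat

def edgePos (lay : E → ℕ) (sideE : E → Bool) (e : E) : ℕ := lay e + (sideE e).toNat

theorem inA_iff_even {sideV : V → Bool} {depth : V → ℕ} {u : V} :
    inA sideV depth u ↔ Even (vertexPos sideV depth u) := by
  unfold inA vertexPos
  cases sideV u <;> simp [Nat.even_add_one]

theorem inB_iff_odd {sideV : V → Bool} {depth : V → ℕ} {u : V} :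
    inB sideV depth u ↔ Odd (vertexPos sideV depth u) := by
  unfold inB vertexPos
  cases sideV u <;> simp [Nat.odd_add_one]

variable {n : ℕ} {sideV : V → Bool} {depth : V → ℕ} {lay : E → ℕ} {sideE : E → Bool}
  {ep0 ep1 : E → V} {s t : V}

theorem vertexPos_ep1 (hlay : ∀ e, 1 ≤ lay e ∧ lay e ≤ n + 1)
    (htree : ∀ e, lay e ≤ n → sideV (ep0 e) = sideE e ∧ depth (ep0 e) = lay e - 1 ∧
        sideV (ep1 e) = sideE e ∧ depth (ep1 e) = lay e)
    (hmid : ∀ e, lay e = n + 1 → sideV (ep0 e) = false ∧ depth (ep0 e) = n ∧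
        sideV (ep1 e) = true ∧ depth (ep1 e) = n) (e : E) :
    vertexPos sideV depth (ep1 e) = vertexPos sideV depth (ep0 e) + 1 := by
  unfold vertexPos
  rcases (hlay e).2.lt_or_eq with h | h
  · obtain ⟨h0, d0, h1, d1⟩ := htree e (by omega)
    have := (hlay e).1
    rw [h0, d0, h1, d1]
    omega
  · obtain ⟨h0, d0, h1, d1⟩ := hmid e h
    rw [h0, d0, h1, d1]
    rfl

theorem amp_edgePos (hn : Odd n) (hlay : ∀ e, 1 ≤ lay e ∧ lay e ≤ n + 1)
    (htree : ∀ e, lay e ≤ n → sideV (ep0 e) = sideE e ∧ depth (ep0 e) = lay e - 1 ∧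
        sideV (ep1 e) = sideE e ∧ depth (ep1 e) = lay e)
    (hmid : ∀ e, lay e = n + 1 → sideV (ep0 e) = false ∧ depth (ep0 e) = n ∧
        sideV (ep1 e) = true ∧ depth (ep1 e) = n) (e : E) :
    amp (edgePos lay sideE e) = amp (vertexPos sideV depth (ep1 e)) := by
  unfold edgePos vertexPos
  rcases (hlay e).2.lt_or_eq with h | h
  · obtain ⟨-, -, h1, d1⟩ := htree e (by omega)
    rw [h1, d1]
  · obtain ⟨-, -, h1, d1⟩ := hmid e h
    rw [h1, d1, h]
    cases sideE e
    · rfl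
    · exact amp_succ_of_even hn.add_one

def partAWeight (sideV : V → Bool) (depth : V → ℕ) (u : V) : ℂ :=
  if Even (vertexPos sideV depth u) then amp (vertexPos sideV depth u) else 0

theorem partAWeight_ep0_add_ep1
    (hpos : ∀ e, vertexPos sideV depth (ep1 e) = vertexPos sideV depth (ep0 e) + 1)
    (hamp : ∀ e, amp (edgePos lay sideE e) = amp (vertexPos sideV depth (ep1 e))) (e : E) :
    partAWeight sideV depth (ep0 e) + partAWeight sideV depth (ep1 e)
      = amp (edgePos lay sideE e) := by
  unfold partAWeight
  rw [hamp, hpos]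
  rcases Nat.even_or_odd (vertexPos sideV depth (ep0 e)) with h | h
  · rw [if_pos h, if_neg (Nat.not_even_iff_odd.2 h.add_one), add_zero, amp_succ_of_even h]
  · rw [if_neg (Nat.not_even_iff_odd.2 h), if_pos h.add_one, zero_add]

section Counting

variable [Fintype E] [DecidableEq V]

theorem card_children_of_inB (hn : Odd n) (hdepth : ∀ u, depth u ≤ n)
    (hlay : ∀ e, 1 ≤ lay e ∧ lay e ≤ n + 1)
    (htree : ∀ e, lay e ≤ n → sideV (ep0 e) = sideE e ∧ depth (ep0 e) = lay e - 1 ∧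
        sideV (ep1 e) = sideE e ∧ depth (ep1 e) = lay e)
    (hchild : ∀ u, depth u < n → (Finset.univ.filter fun e => ep0 e = u).card = 2)
    (hmidL : ∀ u, sideV u = false → depth u = n →
        (Finset.univ.filter fun e => lay e = n + 1 ∧ ep0 e = u).card = 2)
    {u : V} (hu : inB sideV depth u) :
    (Finset.univ.filter fun e => ep0 e = u).card = 2 := by
  rcases (hdepth u).lt_or_eq with hlt | hleaf
  · exact hchild u hlt
  have hleft : sideV u = false := by
    rcases hu with ⟨h, -⟩ | ⟨-, h⟩
    · exact h
    · exact absurd (hleaf ▸ h) (Nat.not_even_iff_odd.2 hn)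
  have hmiddle : (Finset.univ.filter fun e => ep0 e = u)
      = Finset.univ.filter fun e => lay e = n + 1 ∧ ep0 e = u := by
    refine Finset.filter_congr fun e _ => ⟨fun he => ⟨?_, he⟩, And.right⟩
    have := hlay e
    by_contra hne
    have hd := (htree e (by omega)).2.1
    rw [he, hleaf] at hd
    omega
  rw [hmiddle, hmidL u hleft hleaf]

theorem card_parents_add_ite_of_inB (hn : Odd n) (hlay : ∀ e, 1 ≤ lay e ∧ lay e ≤ n + 1)
    (htree : ∀ e, lay e ≤ n → sideV (ep0 e) = sideE e ∧ depth (ep0 e) = lay e - 1 ∧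
        sideV (ep1 e) = sideE e ∧ depth (ep1 e) = lay e)
    (hmid : ∀ e, lay e = n + 1 → sideV (ep0 e) = false ∧ depth (ep0 e) = n ∧
        sideV (ep1 e) = true ∧ depth (ep1 e) = n)
    (ht : sideV t = true ∧ depth t = 0)
    (hroot : ∀ u, depth u = 0 → (sideV u = false → u = s) ∧ (sideV u = true → u = t))
    (hparent : ∀ u, 1 ≤ depth u →
        (Finset.univ.filter fun e => lay e ≤ n ∧ ep1 e = u).card = 1)
    {u : V} (hu : inB sideV depth u) :
    (Finset.univ.filter fun e => ep1 e = u).card + (if u = t then 1 else 0) = 1 := by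
  rcases Nat.eq_zero_or_pos (depth u) with hzero | hdeep
  · have hut : u = t := by
      refine (hroot u hzero).2 ?_
      rcases hu with ⟨-, h⟩ | ⟨h, -⟩
      · exact absurd (hzero ▸ h) Nat.not_odd_zero
      · exact h
    have hnone : (Finset.univ.filter fun e => ep1 e = u) = ∅ := by
      refine Finset.filter_eq_empty_iff.2 fun e _ he => ?_
      rcases (hlay e).2.lt_or_eq with h | h
      · have hd := (htree e (by omega)).2.2.2
        rw [he, hzero] at hd
        have := (hlay e).1
        omega
      · have hd := (hmid e h).2.2.2
        rw [he, hzero] at hd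
        have := hn.pos
        omega
    rw [hnone, if_pos hut, Finset.card_empty]
  · have hut : u ≠ t := by
      rintro rfl
      omega
    have htreeOnly : (Finset.univ.filter fun e => ep1 e = u)
        = Finset.univ.filter fun e => lay e ≤ n ∧ ep1 e = u := by
      refine Finset.filter_congr fun e _ => ⟨fun he => ⟨?_, he⟩, And.right⟩
      have := hlay e
      by_contra hne
      obtain ⟨-, -, hright, hleaf⟩ := hmid e (by omega)
      rw [he] at hright hleaf
      rcases hu with ⟨h, -⟩ | ⟨-, h⟩
      · rw [hright] at h
        exact Bool.noConfusion h
      · exact absurd (hleaf ▸ h) (Nat.not_even_iff_odd.2 hn)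
    rw [htreeOnly, hparent u hdeep, if_neg hut]

end Counting

section Vectors

variable [DecidableEq E]

theorem ket_apply (x y : E ⊕ Bool) : ket x y = if y = x then 1 else 0 :=
  PiLp.single_apply 2 ℂ x 1 y

variable [Fintype E]

theorem v₂_apply_inl (f : E) :
    v₂ lay sideE (Sum.inl f) = amp (edgePos lay sideE f) := by
  simp only [v₂, WithLp.ofLp_sum, Finset.sum_apply, PiLp.smul_apply, ket_apply, smul_eq_mul,
    mul_ite, mul_one, mul_zero, Sum.inl.injEq, Finset.sum_ite_eq, Finset.mem_univ, if_true]
  cases h : sideE f <;> simp [amp, edgePos, h]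

theorem v₂_apply_inr (b : Bool) :
    v₂ lay sideE (Sum.inr b) = 0 := by
  simp only [v₂, WithLp.ofLp_sum, Finset.sum_apply, PiLp.smul_apply, ket_apply, smul_eq_mul]
  simp

variable [DecidableEq V]

theorem psi_apply_inl (u : V) (f : E) :
    psi ep0 ep1 s t u (Sum.inl f)
      = (if ep0 f = u then 1 else 0) + (if ep1 f = u then 1 else 0) := by
  simp [psi, ket_apply, apply_ite (fun g : EuclideanSpace ℂ (E ⊕ Bool) => g (Sum.inl f))]

theorem psi_apply_inr_false (u : V) :
    psi ep0 ep1 s t u (Sum.inr false) = if u = s then 1 else 0 := by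
  simp [psi, ket_apply, apply_ite (fun g : EuclideanSpace ℂ (E ⊕ Bool) => g (Sum.inr false))]

theorem psi_apply_inr_true (u : V) :
    psi ep0 ep1 s t u (Sum.inr true) = if u = t then 1 else 0 := by
  simp [psi, ket_apply, apply_ite (fun g : EuclideanSpace ℂ (E ⊕ Bool) => g (Sum.inr true))]

theorem inner_psi (u : V) (y : EuclideanSpace ℂ (E ⊕ Bool)) :
    inner ℂ (psi ep0 ep1 s t u) y
      = (∑ e ∈ Finset.univ.filter (fun e => ep0 e = u), y (Sum.inl e))
      + (∑ e ∈ Finset.univ.filter (fun e => ep1 e = u), y (Sum.inl e))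
      + (if u = s then y (Sum.inr false) else 0)
      + (if u = t then y (Sum.inr true) else 0) := by
  simp only [psi, ket, inner_add_left, sum_inner, EuclideanSpace.inner_single_left, map_one,
    one_mul, apply_ite (fun v : EuclideanSpace ℂ (E ⊕ Bool) => inner ℂ v y), inner_zero_left]

section SumSmulPsi

variable [Fintype V] (w : V → ℂ)

theorem sum_smul_psi_apply_inl (f : E) :
    (∑ u, w u • psi ep0 ep1 s t u) (Sum.inl f) = w (ep0 f) + w (ep1 f) := by
  simp [WithLp.ofLp_sum, Finset.sum_apply, psi_apply_inl, mul_add, Finset.sum_add_distrib]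

theorem sum_smul_psi_apply_inr_false :
    (∑ u, w u • psi ep0 ep1 s t u) (Sum.inr false) = w s := by
  simp [WithLp.ofLp_sum, Finset.sum_apply, psi_apply_inr_false]

theorem sum_smul_psi_apply_inr_true :
    (∑ u, w u • psi ep0 ep1 s t u) (Sum.inr true) = w t := by
  simp [WithLp.ofLp_sum, Finset.sum_apply, psi_apply_inr_true]

end SumSmulPsi

theorem ket_add_v₂_eq_sum_smul_psi [Fintype V]
    (hpos : ∀ e, vertexPos sideV depth (ep1 e) = vertexPos sideV depth (ep0 e) + 1)
    (hamp : ∀ e, amp (edgePos lay sideE e) = amp (vertexPos sideV depth (ep1 e)))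
    (hs : sideV s = false ∧ depth s = 0) (ht : sideV t = true ∧ depth t = 0) :
    ket (Sum.inr false) + v₂ lay sideE
      = ∑ u, partAWeight sideV depth u • psi ep0 ep1 s t u := by
  ext (f | _ | _)
  · rw [sum_smul_psi_apply_inl, partAWeight_ep0_add_ep1 hpos hamp, PiLp.add_apply,
      v₂_apply_inl, ket_apply, if_neg Sum.inl_ne_inr, zero_add]
  · rw [sum_smul_psi_apply_inr_false]
    simp [ket_apply, v₂_apply_inr, partAWeight, vertexPos, hs, amp]
  · rw [sum_smul_psi_apply_inr_true]
    simp [ket_apply, v₂_apply_inr, partAWeight, vertexPos, ht]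

theorem ket_add_v₂_mem_span [Fintype V]
    (hpos : ∀ e, vertexPos sideV depth (ep1 e) = vertexPos sideV depth (ep0 e) + 1)
    (hamp : ∀ e, amp (edgePos lay sideE e) = amp (vertexPos sideV depth (ep1 e)))
    (hs : sideV s = false ∧ depth s = 0) (ht : sideV t = true ∧ depth t = 0) :
    ket (Sum.inr false) + v₂ lay sideE ∈
      Submodule.span ℂ (psi ep0 ep1 s t '' {u | inA sideV depth u}) := by
  rw [ket_add_v₂_eq_sum_smul_psi hpos hamp hs ht]
  exact sum_smul_mem_span_image _ _ _ fun u hu => if_neg (mt inA_iff_even.2 hu)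

theorem inner_psi_v₂_add_ket_of_inB
    (hpos : ∀ e, vertexPos sideV depth (ep1 e) = vertexPos sideV depth (ep0 e) + 1)
    (hamp : ∀ e, amp (edgePos lay sideE e) = amp (vertexPos sideV depth (ep1 e)))
    (ht : sideV t = true ∧ depth t = 0) {u : V} (hu : inB sideV depth u)
    (hchildren : (Finset.univ.filter fun e => ep0 e = u).card = 2)
    (hparents : (Finset.univ.filter fun e => ep1 e = u).card + (if u = t then 1 else 0) = 1) :
    inner ℂ (psi ep0 ep1 s t u) (v₂ lay sideE + ket (Sum.inr true)) = 0 := by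
  set p := vertexPos sideV depth u
  set y : EuclideanSpace ℂ (E ⊕ Bool) := v₂ lay sideE + ket (Sum.inr true)
  have hcoord (e : E) : y (Sum.inl e) = amp (edgePos lay sideE e) := by
    simp [y, v₂_apply_inl, ket_apply]
  have hsource : y (Sum.inr false) = 0 := by
    simp [y, v₂_apply_inr, ket_apply]
  have hchild : ∀ e ∈ Finset.univ.filter fun e => ep0 e = u,
      amp (edgePos lay sideE e) = -(1/2) * amp p := fun e he => by
    rw [hamp, hpos, (Finset.mem_filter.1 he).2, amp_succ_of_odd (inB_iff_odd.1 hu)]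
  have hparent : ∀ e ∈ Finset.univ.filter fun e => ep1 e = u,
      amp (edgePos lay sideE e) = amp p := fun e he => by
    rw [hamp, (Finset.mem_filter.1 he).2]
  -- `t` sits at position 1, where the amplitude is 1: `t't` acts as the parent edge of `t`.
  have hroot : (if u = t then y (Sum.inr true) else 0)
      = (if u = t then 1 else 0) * amp p := by
    split_ifs with h
    · simp [y, p, h, v₂_apply_inr, ket_apply, vertexPos, ht, amp]
    · simp
  have hparents' := congrArg (Nat.cast : ℕ → ℂ) hparents
  push_cast at hparents'
  rw [inner_psi, Finset.sum_congr rfl fun e _ => hcoord e, Finset.sum_congr rfl fun e _ => hcoord e,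
    Finset.sum_congr rfl hchild, Finset.sum_congr rfl hparent, hsource, hroot]
  simp only [Finset.sum_const, hchildren, nsmul_eq_mul, ite_self, add_zero]
  linear_combination amp p * hparents'

end Vectors

end Stmt8

namespace Stmt8

variable {V E : Type*} [Fintype V] [Fintype E] [DecidableEq V] [DecidableEq E]

theorem welded_v2_reflections
    (n : ℕ) (hn : Odd n)
    (sideV : V → Bool) (depth : V → ℕ) (hdepth : ∀ u, depth u ≤ n)
    (lay : E → ℕ) (sideE : E → Bool) (ep0 ep1 : E → V)
    (hlay : ∀ e, 1 ≤ lay e ∧ lay e ≤ n + 1)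
    (htree : ∀ e, lay e ≤ n → sideV (ep0 e) = sideE e ∧ depth (ep0 e) = lay e - 1 ∧
        sideV (ep1 e) = sideE e ∧ depth (ep1 e) = lay e)
    (hmid : ∀ e, lay e = n + 1 → sideV (ep0 e) = false ∧ depth (ep0 e) = n ∧
        sideV (ep1 e) = true ∧ depth (ep1 e) = n)
    (s t : V) (hs : sideV s = false ∧ depth s = 0) (ht : sideV t = true ∧ depth t = 0)
    (hroot : ∀ u, depth u = 0 → (sideV u = false → u = s) ∧ (sideV u = true → u = t))
    (hchild : ∀ u, depth u < n → (Finset.univ.filter fun e => ep0 e = u).card = 2)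
    (hparent : ∀ u, 1 ≤ depth u →
        (Finset.univ.filter fun e => lay e ≤ n ∧ ep1 e = u).card = 1)
    (hmidL : ∀ u, sideV u = false → depth u = n →
        (Finset.univ.filter fun e => lay e = n + 1 ∧ ep0 e = u).card = 2)
    (RA RB : EuclideanSpace ℂ (E ⊕ Bool) →ₗ[ℂ] EuclideanSpace ℂ (E ⊕ Bool))
    (hRAneg : ∀ u, inA sideV depth u → RA (psi ep0 ep1 s t u) = -psi ep0 ep1 s t u)
    (hRAid : ∀ x, (∀ u, inA sideV depth u → (inner ℂ (psi ep0 ep1 s t u) x : ℂ) = 0) → RA x = x)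
    (hRBid : ∀ x, (∀ u, inB sideV depth u → (inner ℂ (psi ep0 ep1 s t u) x : ℂ) = 0) → RB x = x) :
    (ket (Sum.inr false) + v₂ lay sideE) ∈
        Submodule.span ℂ (psi ep0 ep1 s t '' {u | inA sideV depth u}) ∧
    (∀ u, inB sideV depth u →
        (inner ℂ (psi ep0 ep1 s t u) (v₂ lay sideE + ket (Sum.inr true)) : ℂ) = 0) ∧
    RA (ket (Sum.inr false) + v₂ lay sideE - ket (Sum.inr true))
        = -ket (Sum.inr false) - v₂ lay sideE - ket (Sum.inr true) ∧
    RB (-ket (Sum.inr false) - v₂ lay sideE - ket (Sum.inr true))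
        = -ket (Sum.inr false) - v₂ lay sideE - ket (Sum.inr true) := by
  have hpos := vertexPos_ep1 hlay htree hmid
  have hamp := amp_edgePos hn hlay htree hmid
  have hspan := ket_add_v₂_mem_span (ep0 := ep0) (ep1 := ep1) hpos hamp hs ht
  have horth (u : V) (hu : inB sideV depth u) :
      inner ℂ (psi ep0 ep1 s t u) (v₂ lay sideE + ket (Sum.inr true)) = 0 :=
    inner_psi_v₂_add_ket_of_inB hpos hamp ht hu
      (card_children_of_inB hn hdepth hlay htree hchild hmidL hu)
      (card_parents_add_ite_of_inB hn hlay htree hmid ht hroot hparent hu)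
  refine ⟨hspan, horth, ?_, ?_⟩
  · have hneg :
        RA (ket (Sum.inr false) + v₂ lay sideE) = -(ket (Sum.inr false) + v₂ lay sideE) :=
      LinearMap.eqOn_span' (g := -LinearMap.id)
        (by rintro _ ⟨u, hu, rfl⟩; exact hRAneg u hu) hspan
    have hfix : RA (ket (Sum.inr true)) = ket (Sum.inr true) := hRAid _ fun u hu => by
      have hut : u ≠ t := by
        rintro rfl
        simp [inA, ht] at hu
      simp [inner_psi, ket_apply, hut]
    rw [sub_eq_add_neg, map_add, map_neg, hneg, hfix]
    abel
  · refine hRBid _ fun u hu => ?_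
    have hus : u ≠ s := by
      rintro rfl
      simp [inB, hs] at hu
    rw [show -ket (Sum.inr false) - v₂ lay sideE - ket (Sum.inr true)
        = -ket (Sum.inr false) - (v₂ lay sideE + ket (Sum.inr true)) by abel,
      inner_sub_right, inner_neg_right, horth u hu]
    simp [inner_psi, ket_apply, hus]

end Stmt8
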